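/- arXiv:2302.09717 — 4 statements merged into one kernel-verified Lean document; each statement's English description precedes it below -/
import Mathlib

section
/- (Quartic achievability, double-IRS) Assume h_{n1,n2} = u^{(1)}_{n1} u^{(2)}_{n2} with all factors nonzero. Let δ_1 = (1/N)Σ|u^{(1)}_{n1}| and δ_2 = (1/N)Σ|u^{(2)}_{n2}|. Suppose for each n1 there is θ'_{n1} with |θ'_{n1} - (η - arg u^{(1)}_{n1})| ≤ β₁ < π/2 (mod 2π, η fixed), and for each n2 there is θ'_{n2} with angular distance at most β₂ < π/2 from arg(d) - arg(ξ_{n2}) where d = h_{0,0} + Σ_{n1} h_{n1,0} e^{iθ'_{n1}} ≠ 0 and ξ_{n2} = h_{0,n2} + Σ_{n1} h_{n1,n2} e^{iθ'_{n1}}. If additionally |h_{0,n2}| ≤ (1/2)|Σ_{n1} h_{n1,n2} e^{iθ'_{n1}}| for all n2, then |g(θ'_{n1}, θ'_{n2})|² ≥ ((1/2) cos(β₂) cos(β₁) N² δ_1 δ_2)², where g is the effective double-IRS channel. -/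
open Real Complex

noncomputable def angDist (a b : ℝ) : ℝ := |((↑(a - b) : Real.Angle)).toReal|

/-!
Both IRS phase configurations are "phase alignment" steps: if every term `z i * exp (θ i * I)` is
rotated to within angle `β ≤ π` of a common direction `ψ`, then projecting the sum onto that
direction gives `‖∑ i, z i * exp (θ i * I)‖ ≥ cos β * ∑ i, ‖z i‖`.  Since the cascaded channel
factors as `h n1 n2 = u1 n1 * u2 n2`, the second-hop coefficients are
`ξ n2 = h01 n2 + u2 n2 * S` with `S = ∑ n1, u1 n1 * exp (θ1 n1 * I)`; alignment of the first IRS gives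
`‖S‖ ≥ cos β1 * N * δ1`, the weak direct link gives `‖ξ n2‖ ≥ ‖u2 n2‖ * ‖S‖ / 2`, and alignment of
the second IRS with `d` gives `‖g‖ ≥ cos β2 * ∑ n2, ‖ξ n2‖`.
-/

namespace DoubleIRS

open Finset

theorem cos_le_cos_of_angDist_le {a b β : ℝ} (hβ : β ≤ π) (h : angDist a b ≤ β) :
    Real.cos β ≤ Real.cos (a - b) := by
  unfold angDist at h
  have := Real.cos_le_cos_of_nonneg_of_le_pi (abs_nonneg _) hβ h
  rwa [Real.cos_abs, Real.Angle.cos_toReal, Real.Angle.cos_coe] at this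

theorem cos_mul_norm_le_re_rotate {z : ℂ} {θ ψ β : ℝ} (hβ : β ≤ π)
    (h : angDist θ (ψ - arg z) ≤ β) :
    Real.cos β * ‖z‖ ≤ (exp (↑(-ψ) * I) * (z * exp (θ * I))).re := by
  have hpolar : exp (↑(-ψ) * I) * (z * exp (θ * I))
      = ‖z‖ * exp (↑(θ - (ψ - arg z)) * I) := by
    conv_lhs => rw [← norm_mul_exp_arg_mul_I z]
    rw [show exp (↑(θ - (ψ - arg z)) * I) = exp (arg z * I) * exp (θ * I) * exp (↑(-ψ) * I) by
      rw [← Complex.exp_add, ← Complex.exp_add]; push_cast; ring_nf]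
    ring
  rw [hpolar, re_ofReal_mul, exp_ofReal_mul_I_re, mul_comm]
  gcongr
  exact cos_le_cos_of_angDist_le hβ h

variable {ι : Type*} (s : Finset ι) (z : ι → ℂ) (θ : ι → ℝ) {β : ℝ}

theorem cos_mul_sum_norm_le_re_rotate_sum {ψ : ℝ} (hβ : β ≤ π)
    (h : ∀ i ∈ s, angDist (θ i) (ψ - arg (z i)) ≤ β) :
    Real.cos β * ∑ i ∈ s, ‖z i‖ ≤ (exp (↑(-ψ) * I) * ∑ i ∈ s, z i * exp (θ i * I)).re := by
  rw [mul_sum, mul_sum, re_sum]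
  exact sum_le_sum fun i hi => cos_mul_norm_le_re_rotate hβ (h i hi)

theorem cos_mul_sum_norm_le_norm_sum {ψ : ℝ} (hβ : β ≤ π)
    (h : ∀ i ∈ s, angDist (θ i) (ψ - arg (z i)) ≤ β) :
    Real.cos β * ∑ i ∈ s, ‖z i‖ ≤ ‖∑ i ∈ s, z i * exp (θ i * I)‖ := by
  refine (cos_mul_sum_norm_le_re_rotate_sum s z θ hβ h).trans ((re_le_norm _).trans_eq ?_)
  rw [norm_mul, norm_exp_ofReal_mul_I, one_mul]

theorem cos_mul_sum_norm_le_norm_add_sum (w : ℂ) (hβ : β ≤ π)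
    (h : ∀ i ∈ s, angDist (θ i) (arg w - arg (z i)) ≤ β) :
    Real.cos β * ∑ i ∈ s, ‖z i‖ ≤ ‖w + ∑ i ∈ s, z i * exp (θ i * I)‖ := by
  have hw : (exp (↑(-arg w) * I) * w).re = ‖w‖ := by
    conv_lhs => rw [← norm_mul_exp_arg_mul_I w]
    rw [mul_left_comm, ← Complex.exp_add]
    simp
  calc Real.cos β * ∑ i ∈ s, ‖z i‖
      ≤ ‖w‖ + (exp (↑(-arg w) * I) * ∑ i ∈ s, z i * exp (θ i * I)).re :=
        le_add_of_nonneg_of_le (norm_nonneg w) (cos_mul_sum_norm_le_re_rotate_sum s z θ hβ h)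
    _ = (exp (↑(-arg w) * I) * (w + ∑ i ∈ s, z i * exp (θ i * I))).re := by
        rw [mul_add, add_re, hw]
    _ ≤ ‖w + ∑ i ∈ s, z i * exp (θ i * I)‖ := by
        refine (re_le_norm _).trans_eq ?_
        rw [norm_mul, norm_exp_ofReal_mul_I, one_mul]

theorem half_norm_le_norm_add {E : Type*} [SeminormedAddCommGroup E] {a b : E}
    (h : ‖a‖ ≤ 1 / 2 * ‖b‖) : 1 / 2 * ‖b‖ ≤ ‖a + b‖ := by
  have := norm_sub_le (a + b) a
  rw [add_sub_cancel_left] at this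
  linarith

theorem channel_eq_add_sum_mul_exp {κ : Type*} [Fintype ι] [Fintype κ] (h00 : ℂ)
    (h10 : ι → ℂ) (h01 : κ → ℂ) (h : ι → κ → ℂ) (θ1 : ι → ℝ) (θ2 : κ → ℝ) :
    h00 + ∑ n1, h10 n1 * exp (θ1 n1 * I) + ∑ n2, h01 n2 * exp (θ2 n2 * I)
        + ∑ n1, ∑ n2, h n1 n2 * exp (↑(θ1 n1 + θ2 n2) * I)
      = (h00 + ∑ n1, h10 n1 * exp (θ1 n1 * I))
        + ∑ n2, (h01 n2 + ∑ n1, h n1 n2 * exp (θ1 n1 * I)) * exp (θ2 n2 * I) := by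
  simp only [ofReal_add, add_mul, Complex.exp_add, sum_mul, sum_add_distrib]
  rw [sum_comm (f := fun n1 n2 => h n1 n2 * (exp (θ1 n1 * I) * exp (θ2 n2 * I)))]
  simp only [mul_assoc]
  ring

theorem natCast_mul_one_div_mul_sum {N : ℕ} (f : Fin N → ℝ) :
    (N : ℝ) * (1 / N * ∑ i, f i) = ∑ i, f i := by
  rcases N.eq_zero_or_pos with rfl | hN
  · simp
  · rw [← mul_assoc, mul_one_div_cancel (by positivity), one_mul]

end DoubleIRS

open DoubleIRS Finset in
theorem double_irs_quartic_achievability_general (N : ℕ)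
    (u1 u2 : Fin N → ℂ)
    (h00 : ℂ) (h10 h01 : Fin N → ℂ)
    (h : Fin N → Fin N → ℂ) (hdef : ∀ n1 n2, h n1 n2 = u1 n1 * u2 n2)
    (δ1 δ2 : ℝ)
    (hδ1 : δ1 = (1 / N) * ∑ n1, ‖u1 n1‖)
    (hδ2 : δ2 = (1 / N) * ∑ n2, ‖u2 n2‖)
    (η β1 β2 : ℝ) (hβ1a : 0 ≤ β1) (hβ1b : β1 < π / 2)
    (hβ2a : 0 ≤ β2) (hβ2b : β2 < π / 2)
    (θ1 θ2 : Fin N → ℝ)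
    (hθ1 : ∀ n1, angDist (θ1 n1) (η - Complex.arg (u1 n1)) ≤ β1)
    (d : ℂ)
    (hd : d = h00 + ∑ n1, h10 n1 * Complex.exp ((θ1 n1 : ℂ) * Complex.I))
    (ξ : Fin N → ℂ)
    (hξ : ∀ n2, ξ n2 = h01 n2 + ∑ n1, h n1 n2 * Complex.exp ((θ1 n1 : ℂ) * Complex.I))
    (hθ2 : ∀ n2, angDist (θ2 n2) (Complex.arg d - Complex.arg (ξ n2)) ≤ β2)
    (hweak : ∀ n2, ‖h01 n2‖ ≤
      (1 / 2) * ‖(∑ n1, h n1 n2 * Complex.exp ((θ1 n1 : ℂ) * Complex.I))‖) :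
    ((1 / 2) * Real.cos β2 * Real.cos β1 * (N : ℝ) ^ 2 * δ1 * δ2) ^ 2 ≤
      ‖(h00
        + (∑ n1, h10 n1 * Complex.exp ((θ1 n1 : ℂ) * Complex.I))
        + (∑ n2, h01 n2 * Complex.exp ((θ2 n2 : ℂ) * Complex.I))
        + ∑ n1, ∑ n2, h n1 n2 *
            Complex.exp (((θ1 n1 + θ2 n2 : ℝ) : ℂ) * Complex.I))‖ ^ 2 := by
  have hcos1 : 0 ≤ Real.cos β1 := Real.cos_nonneg_of_mem_Icc ⟨by linarith, hβ1b.le⟩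
  have hcos2 : 0 ≤ Real.cos β2 := Real.cos_nonneg_of_mem_Icc ⟨by linarith, hβ2b.le⟩
  set S := ∑ n1, u1 n1 * exp (θ1 n1 * I)
  have hS : Real.cos β1 * ∑ n1, ‖u1 n1‖ ≤ ‖S‖ :=
    cos_mul_sum_norm_le_norm_sum _ _ _ (by linarith) fun n1 _ => hθ1 n1
  have hinner (n2 : Fin N) : ∑ n1, h n1 n2 * exp (θ1 n1 * I) = u2 n2 * S := by
    simp only [S, hdef, mul_sum]
    exact sum_congr rfl fun _ _ => by ring
  have hξ_sum : 1 / 2 * ∑ n2, ‖u2 n2‖ * ‖S‖ ≤ ∑ n2, ‖ξ n2‖ := by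
    rw [mul_sum]
    gcongr with n2
    rw [hξ, hinner, ← norm_mul]
    exact half_norm_le_norm_add (hinner n2 ▸ hweak n2)
  have hlower : 1 / 2 * Real.cos β2 * Real.cos β1 * (N : ℝ) ^ 2 * δ1 * δ2
      = Real.cos β2 * (1 / 2 * ∑ n2, ‖u2 n2‖ * (Real.cos β1 * ∑ n1, ‖u1 n1‖)) := by
    have hNδ1 : (N : ℝ) * δ1 = ∑ n1, ‖u1 n1‖ := hδ1 ▸ natCast_mul_one_div_mul_sum _
    have hNδ2 : (N : ℝ) * δ2 = ∑ n2, ‖u2 n2‖ := hδ2 ▸ natCast_mul_one_div_mul_sum _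
    rw [← sum_mul, ← hNδ1, ← hNδ2]
    ring
  have hlower_nonneg : 0 ≤ 1 / 2 * Real.cos β2 * Real.cos β1 * (N : ℝ) ^ 2 * δ1 * δ2 := by
    rw [hlower]
    exact mul_nonneg hcos2 (mul_nonneg (by norm_num) (sum_nonneg fun _ _ =>
      mul_nonneg (norm_nonneg _) (mul_nonneg hcos1 (by positivity))))
  rw [channel_eq_add_sum_mul_exp, ← hd]
  simp only [← hξ]
  refine pow_le_pow_left₀ hlower_nonneg ?_ 2
  calc _ = Real.cos β2 * (1 / 2 * ∑ n2, ‖u2 n2‖ * (Real.cos β1 * ∑ n1, ‖u1 n1‖)) := hlower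
    _ ≤ Real.cos β2 * (1 / 2 * ∑ n2, ‖u2 n2‖ * ‖S‖) := by gcongr
    _ ≤ Real.cos β2 * ∑ n2, ‖ξ n2‖ := by gcongr
    _ ≤ _ := cos_mul_sum_norm_le_norm_add_sum _ _ _ d (by linarith) fun n2 _ => hθ2 n2

theorem double_irs_quartic_achievability (N : ℕ)
    (u1 u2 : Fin N → ℂ) (hu1 : ∀ n, u1 n ≠ 0) (hu2 : ∀ n, u2 n ≠ 0)
    (h00 : ℂ) (h10 h01 : Fin N → ℂ)
    (h : Fin N → Fin N → ℂ) (hdef : ∀ n1 n2, h n1 n2 = u1 n1 * u2 n2)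
    (δ1 δ2 : ℝ)
    (hδ1 : δ1 = (1 / N) * ∑ n1, ‖u1 n1‖)
    (hδ2 : δ2 = (1 / N) * ∑ n2, ‖u2 n2‖)
    (η β1 β2 : ℝ) (hβ1a : 0 ≤ β1) (hβ1b : β1 < π / 2)
    (hβ2a : 0 ≤ β2) (hβ2b : β2 < π / 2)
    (θ1 θ2 : Fin N → ℝ)
    (hθ1 : ∀ n1, angDist (θ1 n1) (η - Complex.arg (u1 n1)) ≤ β1)
    (d : ℂ)
    (hd : d = h00 + ∑ n1, h10 n1 * Complex.exp ((θ1 n1 : ℂ) * Complex.I))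
    (hd0 : d ≠ 0)
    (ξ : Fin N → ℂ)
    (hξ : ∀ n2, ξ n2 = h01 n2 + ∑ n1, h n1 n2 * Complex.exp ((θ1 n1 : ℂ) * Complex.I))
    (hθ2 : ∀ n2, angDist (θ2 n2) (Complex.arg d - Complex.arg (ξ n2)) ≤ β2)
    (hweak : ∀ n2, ‖h01 n2‖ ≤
      (1 / 2) * ‖(∑ n1, h n1 n2 * Complex.exp ((θ1 n1 : ℂ) * Complex.I))‖) :
    ((1 / 2) * Real.cos β2 * Real.cos β1 * (N : ℝ) ^ 2 * δ1 * δ2) ^ 2 ≤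
      ‖(h00
        + (∑ n1, h10 n1 * Complex.exp ((θ1 n1 : ℂ) * Complex.I))
        + (∑ n2, h01 n2 * Complex.exp ((θ2 n2 : ℂ) * Complex.I))
        + ∑ n1, ∑ n2, h n1 n2 *
            Complex.exp (((θ1 n1 + θ2 n2 : ℝ) : ℂ) * Complex.I))‖ ^ 2 :=
  double_irs_quartic_achievability_general N u1 u2 h00 h10 h01 h hdef δ1 δ2 hδ1 hδ2 η β1 β2 hβ1a
    hβ1b hβ2a hβ2b θ1 θ2 hθ1 d hd ξ hξ hθ2 hweak
end

section
/- Let u^{(ℓ)}_n ∈ ℂ be nonzero for ℓ ∈ {1,…,L-1}, n ∈ {1,…,N}, and for each ℓ, n let θ'_n^{(ℓ)} satisfy |θ'_n^{(ℓ)} + arg(u^{(ℓ)}_n) - c_ℓ| ≤ β_ℓ (mod 2π) for fixed constants c_ℓ and β_ℓ ≥ 0 with Σ_{ℓ=1}^{L-1} β_ℓ < π/2. Then |Σ over all tuples (n_1,…,n_{L-1}) ∈ [1:N]^{L-1} of Π_ℓ u^{(ℓ)}_{nℓ} e^{iθ'_{nℓ}^{(ℓ)}}| ≥ cos(Σ_ℓ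 β_ℓ) · Π_ℓ Σ_n |u^{(ℓ)}_n|. -/
/-!
Expanding the product of sums, each summand is `∏ ℓ ‖u ℓ (f ℓ)‖ * exp (φ_f * I)` with
`φ_f = ∑ ℓ (θ' ℓ (f ℓ) + arg (u ℓ (f ℓ)))`. The angular distance is the norm of `Real.Angle`, so
it is subadditive and `φ_f` lies within `∑ β` of `∑ c` on the circle. After rotating by
`exp (-(∑ c) * I)`, every summand has real part at least `cos (∑ β)` times its modulus, and the
modulus of the sum dominates the real part of the rotated sum.
-/

open Real Complex

lemma Real.Angle.norm_eq_abs_toReal (θ : Real.Angle) : ‖θ‖ = |θ.toReal| := by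
  conv_lhs => rw [← θ.coe_toReal]
  refine (AddCircle.norm_coe_eq_abs_iff (p := 2 * π) two_pi_pos.ne').2 ?_
  rw [abs_of_pos two_pi_pos]
  linarith [θ.abs_toReal_le_pi]

lemma angDist_eq_norm (a b : ℝ) : angDist a b = ‖((a - b : ℝ) : Real.Angle)‖ :=
  (Real.Angle.norm_eq_abs_toReal _).symm

lemma angDist_sum_le {ι : Type*} (s : Finset ι) (a b : ι → ℝ) :
    angDist (∑ i ∈ s, a i) (∑ i ∈ s, b i) ≤ ∑ i ∈ s, angDist (a i) (b i) := by
  simp only [angDist_eq_norm, ← Finset.sum_sub_distrib, ← Real.Angle.coe_coeHom, map_sum]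
  exact norm_sum_le _ _

lemma cos_le_cos_sub_of_angDist_le {a b T : ℝ} (hT : T ≤ π) (h : angDist a b ≤ T) :
    Real.cos T ≤ Real.cos (a - b) := by
  rw [← Real.Angle.cos_coe (a - b), ← Real.Angle.cos_toReal,
    ← Real.cos_abs (Real.Angle.toReal _)]
  exact cos_le_cos_of_nonneg_of_le_pi (abs_nonneg _) hT h

lemma prod_mul_exp_eq_ofReal_mul_exp {ι : Type*} (s : Finset ι) (u : ι → ℂ) (θ : ι → ℝ) :
    ∏ i ∈ s, u i * exp (θ i * I) =
      ((∏ i ∈ s, ‖u i‖ : ℝ) : ℂ) * exp ((∑ i ∈ s, (θ i + arg (u i)) : ℝ) * I) := by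
  have polar : ∀ i, u i * exp (θ i * I) = ‖u i‖ * exp ((θ i + arg (u i) : ℝ) * I) := fun i => by
    conv_lhs => rw [← norm_mul_exp_arg_mul_I (u i)]
    rw [mul_assoc, ← Complex.exp_add]
    push_cast
    ring_nf
  simp only [polar, Finset.prod_mul_distrib, ← Complex.exp_sum, ofReal_prod, ofReal_sum,
    Finset.sum_mul]

lemma cos_mul_sum_le_norm_sum_ofReal_mul_exp {ι : Type*} (s : Finset ι) {r φ : ι → ℝ}
    {c T : ℝ} (hr : ∀ i ∈ s, 0 ≤ r i) (hT : T ≤ π) (hφ : ∀ i ∈ s, angDist (φ i) c ≤ T) :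
    Real.cos T * ∑ i ∈ s, r i ≤ ‖∑ i ∈ s, (r i : ℂ) * exp (φ i * I)‖ := calc
  Real.cos T * ∑ i ∈ s, r i ≤ ∑ i ∈ s, r i * Real.cos (φ i - c) := by
    rw [Finset.mul_sum]
    refine Finset.sum_le_sum fun i hi => ?_
    rw [mul_comm]
    exact mul_le_mul_of_nonneg_left (cos_le_cos_sub_of_angDist_le hT (hφ i hi)) (hr i hi)
  _ = (exp ((-c : ℝ) * I) * ∑ i ∈ s, (r i : ℂ) * exp (φ i * I)).re := by
    rw [Finset.mul_sum, re_sum]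
    refine Finset.sum_congr rfl fun i _ => ?_
    rw [mul_left_comm, ← Complex.exp_add, ← add_mul, ← ofReal_add, re_ofReal_mul,
      exp_ofReal_mul_I_re, neg_add_eq_sub]
  _ ≤ ‖∑ i ∈ s, (r i : ℂ) * exp (φ i * I)‖ := by
    refine (re_le_norm _).trans_eq ?_
    rw [norm_mul, norm_exp_ofReal_mul_I, one_mul]

theorem multi_irs_product_sum_lower_bound_general (L N : ℕ)
    (u : Fin (L - 1) → Fin N → ℂ)
    (θ' : Fin (L - 1) → Fin N → ℝ) (c β : Fin (L - 1) → ℝ)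
    (hβsum : (∑ ℓ, β ℓ) < π / 2)
    (hθ : ∀ ℓ n, angDist (θ' ℓ n + Complex.arg (u ℓ n)) (c ℓ) ≤ β ℓ) :
    Real.cos (∑ ℓ, β ℓ) * ∏ ℓ, ∑ n, ‖u ℓ n‖ ≤
      ‖∑ f : Fin (L - 1) → Fin N,
        ∏ ℓ, u ℓ (f ℓ) * Complex.exp ((θ' ℓ (f ℓ) : ℂ) * Complex.I)‖ := by
  classical
  rw [Fintype.prod_sum]
  simp only [prod_mul_exp_eq_ofReal_mul_exp]
  refine cos_mul_sum_le_norm_sum_ofReal_mul_exp _ (fun f _ => by positivity)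
    (by linarith [pi_pos]) (c := ∑ ℓ, c ℓ) fun f _ => ?_
  exact (angDist_sum_le _ _ _).trans (Finset.sum_le_sum fun ℓ _ => hθ ℓ (f ℓ))

theorem multi_irs_product_sum_lower_bound (L N : ℕ) (hL : 2 ≤ L) (hN : 1 ≤ N)
    (u : Fin (L - 1) → Fin N → ℂ) (hu : ∀ ℓ n, u ℓ n ≠ 0)
    (θ' : Fin (L - 1) → Fin N → ℝ) (c β : Fin (L - 1) → ℝ)
    (hβ0 : ∀ ℓ, 0 ≤ β ℓ) (hβsum : (∑ ℓ, β ℓ) < π / 2)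
    (hθ : ∀ ℓ n, angDist (θ' ℓ n + Complex.arg (u ℓ n)) (c ℓ) ≤ β ℓ) :
    Real.cos (∑ ℓ, β ℓ) * ∏ ℓ, ∑ n, ‖u ℓ n‖ ≤
      ‖∑ f : Fin (L - 1) → Fin N,
        ∏ ℓ, u ℓ (f ℓ) * Complex.exp ((θ' ℓ (f ℓ) : ℂ) * Complex.I)‖ :=
  multi_irs_product_sum_lower_bound_general L N u θ' c β hβsum hθ
end

section
/- Let d ∈ ℂ nonzero and let a_1, …, a_N ∈ ℂ. For each n, let θ'_n ∈ Φ_K (K ≥ 3) minimize the angular distance to arg(d) - arg(a_n). Then Re(conj(d)·Σ_n a_n e^{iθ'_n}) ≥ cos(π/K)·|d|·Σ_n |a_n|, and consequently |d + Σ_n a_n e^{iθ'_n}|² ≥ |d|² + 2cos(π/K)|d|Σ_n|a_n| + (cos(π/K) Σ_n |a_n|)². -/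
/-!
Write `d = |d| e^{i arg d}` and `a_n = |a_n| e^{i arg a_n}`. Then the `n`-th summand of
`Re(conj d · Σ a_n e^{iθ'_n})` is `|d| |a_n| cos(θ'_n - (arg d - arg a_n))`. The grid `Φ_K` has
mesh `2π/K`, so every angle lies within `π/K` of it (modulo `2π`); hence the closest grid point
makes each cosine at least `cos(π/K)`. The second inequality is the first one fed into
`|d + w|² = |d|² + 2 Re(conj d · w) + |w|²`, using `|w| ≥ cos(π/K) Σ |a_n|`, which the first
inequality gives after Cauchy–Schwarz `Re(conj d · w) ≤ |d| |w|`.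
-/

open Real Complex

lemma angDist_le_abs_sub (a b : ℝ) : angDist a b ≤ |a - b| := by
  unfold angDist
  by_cases h : -π < a - b ∧ a - b ≤ π
  · rw [Real.Angle.toReal_coe_eq_self_iff.mpr h]
  · have : π ≤ |a - b| := by
      rw [not_and_or, not_lt, not_le] at h
      rcases h with h | h
      · rw [abs_of_neg (by linarith [pi_pos])]; linarith
      · rw [abs_of_pos (by linarith [pi_pos])]; linarith
    exact (Real.Angle.abs_toReal_le_pi _).trans this

lemma angDist_congr_left {a a' : ℝ} (h : (a : Real.Angle) = a') (b : ℝ) :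
    angDist a b = angDist a' b := by
  unfold angDist
  rw [Real.Angle.coe_sub, Real.Angle.coe_sub, h]

lemma exists_angDist_grid_le (K : ℕ) (hK : 0 < K) (φ : ℝ) :
    ∃ k ∈ Finset.Icc 1 K, angDist (2 * π * k / K) φ ≤ π / K := by
  have hKR : (0 : ℝ) < K := by exact_mod_cast hK
  set t := φ * K / (2 * π)
  -- the nearest grid index `round t`, shifted by a multiple of `K` into `[1, K]`
  set q : ℤ := (round t - 1) / K
  set k := ((round t - 1) % K + 1).toNat
  have hmod := Int.emod_nonneg (round t - 1) (by omega : (K : ℤ) ≠ 0)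
  have hk : (k : ℤ) = (round t - 1) % K + 1 := Int.toNat_of_nonneg (by omega)
  have hkK : (k : ℤ) ≤ K := by
    have := Int.emod_lt_of_pos (round t - 1) (by omega : (0 : ℤ) < K); omega
  have hround : (round t : ℝ) = k + K * q := by
    have := Int.emod_add_mul_ediv (round t - 1) K
    exact_mod_cast (show round t = k + K * q by linarith)
  refine ⟨k, Finset.mem_Icc.mpr ⟨by omega, by omega⟩, ?_⟩
  have hcoe : ((2 * π * k / K : ℝ) : Real.Angle) = (2 * π * round t / K : ℝ) :=
    Real.Angle.angle_eq_iff_two_pi_dvd_sub.mpr ⟨-q, by rw [hround]; push_cast; field_simp; ring⟩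
  calc angDist (2 * π * k / K) φ = angDist (2 * π * round t / K) φ := angDist_congr_left hcoe φ
    _ ≤ |2 * π * round t / K - φ| := angDist_le_abs_sub _ _
    _ = 2 * π / K * |round t - t| := by
      rw [← abs_of_pos (by positivity : 0 < 2 * π / K), ← abs_mul]
      congr 1; simp only [t]; field_simp
    _ ≤ 2 * π / K * (1 / 2) := by gcongr; rw [abs_sub_comm]; exact abs_sub_round t
    _ = π / K := by ring

lemma re_conj_mul_mul_exp (d z : ℂ) (θ : ℝ) :
    (starRingEnd ℂ d * (z * Complex.exp (θ * I))).re =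
      ‖d‖ * ‖z‖ * Real.cos (θ - (d.arg - z.arg)) := by
  have h : starRingEnd ℂ d * (z * Complex.exp (θ * I)) =
      ((‖d‖ * ‖z‖ : ℝ) : ℂ) * Complex.exp ((θ - (d.arg - z.arg) : ℝ) * I) := by
    conv_lhs => rw [← norm_mul_exp_arg_mul_I d, ← norm_mul_exp_arg_mul_I z]
    rw [show ((θ - (d.arg - z.arg) : ℝ) : ℂ) * I = -(d.arg * I) + z.arg * I + θ * I by
        push_cast; ring, Complex.exp_add, Complex.exp_add, map_mul, ← exp_conj]
    simp only [map_mul, conj_ofReal, conj_I, mul_neg]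
    push_cast; ring
  rw [h, re_ofReal_mul, exp_ofReal_mul_I_re]

lemma cos_le_cos_sub_of_angDist_le_s17 {θ φ c : ℝ} (hc : c ≤ π) (h : angDist θ φ ≤ c) :
    Real.cos c ≤ Real.cos (θ - φ) := by
  have hcos : Real.cos (θ - φ) = Real.cos (angDist θ φ) := by
    rw [angDist, Real.cos_abs, Real.Angle.cos_toReal, Real.Angle.cos_coe]
  rw [hcos]
  exact Real.cos_le_cos_of_nonneg_of_le_pi (abs_nonneg _) hc h

lemma cos_mul_norm_mul_norm_le_re {d z : ℂ} {θ c : ℝ} (hc : c ≤ π)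
    (h : angDist θ (d.arg - z.arg) ≤ c) :
    Real.cos c * (‖d‖ * ‖z‖) ≤ (starRingEnd ℂ d * (z * Complex.exp (θ * I))).re := by
  rw [re_conj_mul_mul_exp, mul_comm]
  exact mul_le_mul_of_nonneg_left (cos_le_cos_sub_of_angDist_le_s17 hc h) (by positivity)

lemma add_sq_le_norm_add_sq {d w : ℂ} {r : ℝ} (hd : d ≠ 0) (hr : 0 ≤ r)
    (h : ‖d‖ * r ≤ (starRingEnd ℂ d * w).re) : (‖d‖ + r) ^ 2 ≤ ‖d + w‖ ^ 2 := by
  have hre : (starRingEnd ℂ d * w).re ≤ ‖d‖ * ‖w‖ := by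
    simpa only [norm_mul, Complex.norm_conj] using re_le_norm (starRingEnd ℂ d * w)
  have hrw : r ≤ ‖w‖ := le_of_mul_le_mul_left (h.trans hre) (norm_pos_iff.mpr hd)
  have hexp : ‖d + w‖ ^ 2 = ‖d‖ ^ 2 + 2 * (starRingEnd ℂ d * w).re + ‖w‖ ^ 2 := by
    rw [norm_add_sq_real, Complex.inner, mul_comm w]
  nlinarith

theorem cpp_lower_bound_full_general (N K : ℕ) (hK : 3 ≤ K)
    (d : ℂ) (hd : d ≠ 0) (a : Fin N → ℂ)
    (θ' : Fin N → ℝ)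
    (hmin : ∀ n, ∀ k ∈ Finset.Icc 1 K,
      angDist (θ' n) (Complex.arg d - Complex.arg (a n)) ≤
        angDist (2 * π * k / K) (Complex.arg d - Complex.arg (a n))) :
    Real.cos (π / K) * ‖d‖ * (∑ n, ‖a n‖) ≤
        ((starRingEnd ℂ) d * ∑ n, a n * Complex.exp ((θ' n : ℂ) * Complex.I)).re
      ∧ ‖d‖ ^ 2 + 2 * Real.cos (π / K) * ‖d‖ * (∑ n, ‖a n‖)
          + (Real.cos (π / K) * ∑ n, ‖a n‖) ^ 2 ≤
        ‖d + ∑ n, a n * Complex.exp ((θ' n : ℂ) * Complex.I)‖ ^ 2 := by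
  have hKR : (3 : ℝ) ≤ K := by exact_mod_cast hK
  have hπK : π / K ≤ π / 2 := div_le_div_of_nonneg_left pi_pos.le two_pos (by linarith)
  have hcos : 0 ≤ Real.cos (π / K) :=
    Real.cos_nonneg_of_mem_Icc ⟨by linarith [pi_pos, (by positivity : 0 ≤ π / K)], hπK⟩
  have hterm : ∀ n, Real.cos (π / K) * (‖d‖ * ‖a n‖) ≤
      ((starRingEnd ℂ) d * (a n * Complex.exp ((θ' n : ℂ) * Complex.I))).re := fun n => by
    obtain ⟨k, hk, hkφ⟩ := exists_angDist_grid_le K (by omega) (d.arg - (a n).arg)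
    exact cos_mul_norm_mul_norm_le_re (by linarith [pi_pos]) ((hmin n k hk).trans hkφ)
  have hre : Real.cos (π / K) * ‖d‖ * (∑ n, ‖a n‖) ≤
      ((starRingEnd ℂ) d * ∑ n, a n * Complex.exp ((θ' n : ℂ) * Complex.I)).re := by
    rw [mul_assoc, Finset.mul_sum, Finset.mul_sum, Finset.mul_sum, Complex.re_sum]
    exact Finset.sum_le_sum fun n _ => hterm n
  refine ⟨hre, ?_⟩
  have hsum := Finset.sum_nonneg fun n (_ : n ∈ Finset.univ) => norm_nonneg (a n)
  calc _ = (‖d‖ + Real.cos (π / K) * ∑ n, ‖a n‖) ^ 2 := by ring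
    _ ≤ _ := add_sq_le_norm_add_sq hd (mul_nonneg hcos hsum) (by linarith)

theorem cpp_lower_bound_full (N K : ℕ) (hK : 3 ≤ K)
    (d : ℂ) (hd : d ≠ 0) (a : Fin N → ℂ) (ha : ∀ n, a n ≠ 0)
    (θ' : Fin N → ℝ)
    (hmem : ∀ n, ∃ k ∈ Finset.Icc 1 K, θ' n = 2 * π * k / K)
    (hmin : ∀ n, ∀ k ∈ Finset.Icc 1 K,
      angDist (θ' n) (Complex.arg d - Complex.arg (a n)) ≤
        angDist (2 * π * k / K) (Complex.arg d - Complex.arg (a n))) :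
    Real.cos (π / K) * ‖d‖ * (∑ n, ‖a n‖) ≤
        ((starRingEnd ℂ) d * ∑ n, a n * Complex.exp ((θ' n : ℂ) * Complex.I)).re
      ∧ ‖d‖ ^ 2 + 2 * Real.cos (π / K) * ‖d‖ * (∑ n, ‖a n‖)
          + (Real.cos (π / K) * ∑ n, ‖a n‖) ^ 2 ≤
        ‖d + ∑ n, a n * Complex.exp ((θ' n : ℂ) * Complex.I)‖ ^ 2 :=
  cpp_lower_bound_full_general N K hK d hd a θ' hmin
end

section
/- Suppose for all n₁ ∈ {1,…,N}: |h_{n1,0}| ≤ sin(γ)·|Σ_{n2=1}^N h_{n1,n2}| with γ ∈ [0, π/2) and Σ_{n2} h_{n1,n2} ≠ 0. Then for each n1, the angular distance between arg(h_{n1,0} + Σ_{n2} h_{n1,n2}) and arg(Σ_{n2} h_{n1,n2}) is at most γ. -/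
open Real Complex

/-!
Dividing by `s = ∑ h`, the angular distance becomes `|arg (1 + w)|` with `‖w‖ ≤ sin γ < 1`.
The disc of radius `sin γ` about `1` lies in the right half-plane and inside the cone
`|im z| ≤ sin γ ‖z‖` of half-angle `γ`, whose boundary rays are tangent to the disc; in the right
half-plane, `|arg z| ≤ γ` is equivalent to `|sin (arg z)| ≤ sin γ`.
-/

lemma Real.sin_lt_one_of_lt_pi_div_two {x : ℝ} (h0 : -(π / 2) ≤ x) (h1 : x < π / 2) : sin x < 1 :=
  sin_pi_div_two ▸ sin_lt_sin_of_lt_of_le_pi_div_two h0 le_rfl h1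

namespace Complex

lemma abs_im_one_add_le {w : ℂ} {s : ℝ} (hs : s ≤ 1) (hw : ‖w‖ ≤ s) :
    |(1 + w).im| ≤ s * ‖1 + w‖ := by
  have hs0 : 0 ≤ s := (norm_nonneg w).trans hw
  have hs2 : 0 ≤ 1 - s ^ 2 := sub_nonneg.2 (pow_le_one₀ hs0 hs)
  have hw2 : w.re ^ 2 + w.im ^ 2 ≤ s ^ 2 := by
    have := pow_le_pow_left₀ (norm_nonneg w) hw 2
    rwa [Complex.sq_norm, normSq_apply, ← sq, ← sq] at this
  have hz2 : ‖1 + w‖ ^ 2 = (1 + w.re) ^ 2 + w.im ^ 2 := by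
    rw [Complex.sq_norm, normSq_apply, add_re, add_im, one_re, one_im]
    ring
  refine abs_le_of_sq_le_sq ?_ (by positivity)
  rw [mul_pow, hz2, add_im, one_im, zero_add]
  -- the gap is `(1 - s²)(s² - ‖w‖²) + (re w + s²)²`
  linear_combination sq_nonneg (w.re + s ^ 2) + mul_le_mul_of_nonneg_left hw2 hs2

lemma abs_arg_le_of_abs_im_le {z : ℂ} {γ : ℝ} (hz : 0 < z.re) (hγ0 : 0 ≤ γ) (hγ1 : γ ≤ π / 2)
    (him : |z.im| ≤ Real.sin γ * ‖z‖) : |arg z| ≤ γ := by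
  have hz0 : 0 < ‖z‖ := norm_pos_iff.2 fun h ↦ by simp [h] at hz
  have harg : |arg z| ≤ π / 2 := (abs_arg_lt_pi_div_two_iff.2 (Or.inl hz)).le
  rw [← strictMonoOn_sin.le_iff_le ⟨by linarith [abs_nonneg (arg z)], harg⟩
    ⟨by linarith [pi_pos], hγ1⟩, ← abs_sin_eq_sin_abs_of_abs_le_pi (by linarith [pi_pos]),
    sin_arg, abs_div, abs_norm, div_le_iff₀ hz0]
  exact him

lemma abs_arg_one_add_le {w : ℂ} {γ : ℝ} (hγ0 : 0 ≤ γ) (hγ1 : γ < π / 2)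
    (hw : ‖w‖ ≤ Real.sin γ) : |arg (1 + w)| ≤ γ := by
  have hsin : Real.sin γ < 1 := sin_lt_one_of_lt_pi_div_two (by linarith [pi_pos]) hγ1
  have hre : 0 < (1 + w).re := by
    have := neg_le_of_abs_le (abs_re_le_norm w)
    simp only [add_re, one_re]
    linarith
  exact abs_arg_le_of_abs_im_le hre hγ0 hγ1.le (abs_im_one_add_le hsin.le hw)

end Complex

lemma angDist_arg_arg {z w : ℂ} (hz : z ≠ 0) (hw : w ≠ 0) :
    angDist (arg z) (arg w) = |arg (z / w)| := by
  rw [angDist, Real.Angle.coe_sub, ← arg_div_coe_angle hz hw, arg_coe_angle_toReal_eq_arg]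

lemma angDist_arg_add_arg_le {a s : ℂ} {γ : ℝ} (hγ0 : 0 ≤ γ) (hγ1 : γ < π / 2)
    (ha : ‖a‖ ≤ Real.sin γ * ‖s‖) : angDist (arg (a + s)) (arg s) ≤ γ := by
  obtain rfl | hs := eq_or_ne s 0
  · obtain rfl : a = 0 := by simpa using ha
    simpa [angDist] using hγ0
  have hsin : Real.sin γ < 1 := sin_lt_one_of_lt_pi_div_two (by linarith [pi_pos]) hγ1
  have hw : ‖a / s‖ ≤ Real.sin γ := by
    rwa [norm_div, div_le_iff₀ (norm_pos_iff.2 hs)]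
  have hdiv : (a + s) / s = 1 + a / s := by rw [add_div, div_self hs, add_comm]
  have hne : a + s ≠ 0 := fun h0 ↦ by
    have : a / s = -1 := by rw [eq_neg_iff_add_eq_zero, add_comm, ← hdiv, h0, zero_div]
    rw [this, norm_neg, norm_one] at hw
    linarith
  rw [angDist_arg_arg hne hs, hdiv]
  exact abs_arg_one_add_le hγ0 hγ1 hw

theorem row_sum_angle_bound_general (N : ℕ) (h10 : Fin N → ℂ) (h : Fin N → Fin N → ℂ)
    (γ : ℝ) (hγ0 : 0 ≤ γ) (hγ1 : γ < π / 2)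
    (hle : ∀ n1, ‖h10 n1‖ ≤ Real.sin γ * ‖∑ n2, h n1 n2‖) :
    ∀ n1,
      angDist (Complex.arg (h10 n1 + ∑ n2, h n1 n2)) (Complex.arg (∑ n2, h n1 n2)) ≤ γ :=
  fun n1 ↦ angDist_arg_add_arg_le hγ0 hγ1 (hle n1)

theorem row_sum_angle_bound (N : ℕ) (h10 : Fin N → ℂ) (h : Fin N → Fin N → ℂ)
    (γ : ℝ) (hγ0 : 0 ≤ γ) (hγ1 : γ < π / 2)
    (hrow : ∀ n1, (∑ n2, h n1 n2) ≠ 0)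
    (hle : ∀ n1, ‖h10 n1‖ ≤ Real.sin γ * ‖∑ n2, h n1 n2‖) :
    ∀ n1,
      angDist (Complex.arg (h10 n1 + ∑ n2, h n1 n2)) (Complex.arg (∑ n2, h n1 n2)) ≤ γ :=
  row_sum_angle_bound_general N h10 h γ hγ0 hγ1 hle
end
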